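/- arXiv:2111.04553 — 5 statements merged into one kernel-verified Lean document; each statement's English description precedes it below -/
import Mathlib

section
/- Let P(k), k ∈ J, be a projection family such that A(k) maps N(P(k)) bijectively onto N(P(k+1)) whenever k, k+1 ∈ J, and such that the invariance Φ(k,m)P(m) = P(k)Φ(k,m) holds for all k ≥ m in J. Then for all k ≥ m in J: (a) the preimage Φ(k,m)^{−1}(R(P(k))) := {x ∈ ℝⁿ : Φ(k,m)x ∈ R(P(k))} equals R(P(m)); (b) the preimage Φ(k,m)^{−1}(N(P(k))) equals the direct sum N(P(m)) ⊕ N(Φ(k,m)); (c) the nullspace N(Φ(k,m)) of the transition matrix is contained in R(P(m)). -/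
/-!
Composing the bijections `A(j) : N(P(j)) → N(P(j+1))` shows that `Φ(k,m)` maps `N(P(m))`
bijectively onto `N(P(k))`; in particular `N(P(m)) ∩ N(Φ(k,m)) = 0`. The rest is linear algebra
of the intertwining relation `Φ P(m) = P(k) Φ`: `Φ` sends `x - P(m)x ∈ N(P(m))` to
`Φx - P(k)Φx`, which vanishes iff `Φx ∈ R(P(k))`; and `Φ P(m)x = P(k) Φx`, which vanishes
iff `Φx ∈ N(P(k))`. Part (c) is part (a) applied to `Φx = 0`.
-/

noncomputable section

open scoped BigOperators

/-- ℝⁿ as a Euclidean space. -/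
abbrev Euc (n : ℕ) := EuclideanSpace ℝ (Fin n)

/-- The transition matrix `Φ(k,m) = A(k-1) ⋯ A(m)`, with `Φ(m,m) = 1`
(and `Φ(k,m) = 1` when `k ≤ m`). -/
def Phi {n : ℕ} (A : ℤ → (Euc n →L[ℝ] Euc n)) (k m : ℤ) : Euc n →L[ℝ] Euc n :=
  (((List.range (k - m).toNat).map fun i => A (m + i)).reverse).prod

/-- `J` is an interval of integers. -/
def IsIntInterval (J : Set ℤ) : Prop :=
  ∀ ⦃a b c : ℤ⦄, a ∈ J → b ∈ J → a ≤ c → c ≤ b → c ∈ J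

/-- The equation `x(k+1) = A(k) x(k)` has an exponential dichotomy on `J` with
projection family `P`, constant `K` and exponent `α`. -/
structure ExpDichotomyOn {n : ℕ} (A : ℤ → (Euc n →L[ℝ] Euc n)) (J : Set ℤ)
    (P : ℤ → (Euc n →L[ℝ] Euc n)) (K α : ℝ) : Prop where
  one_le_K : 1 ≤ K
  alpha_pos : 0 < α
  proj : ∀ k ∈ J, P k ∘L P k = P k
  rank_const : ∀ k ∈ J, ∀ m ∈ J,
    Module.finrank ℝ (LinearMap.range (P k : Euc n →ₗ[ℝ] Euc n)) = Module.finrank ℝ (LinearMap.range (P m : Euc n →ₗ[ℝ] Euc n))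
  invariance : ∀ m ∈ J, ∀ k ∈ J, m ≤ k → Phi A k m ∘L P m = P k ∘L Phi A k m
  forward : ∀ m ∈ J, ∀ k ∈ J, m ≤ k →
    ‖Phi A k m ∘L P m‖ ≤ K * Real.exp (-α * ((k : ℝ) - (m : ℝ)))
  bijOn : ∀ k : ℤ, k ∈ J → k + 1 ∈ J →
    Set.BijOn (A k) (LinearMap.ker (P k : Euc n →ₗ[ℝ] Euc n) : Set (Euc n)) (LinearMap.ker (P (k + 1) : Euc n →ₗ[ℝ] Euc n) : Set (Euc n))
  backward : ∃ Ψ : ℤ → ℤ → (Euc n →L[ℝ] Euc n), ∀ m ∈ J, ∀ k ∈ J, m ≤ k →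
    (∀ x ∈ LinearMap.ker (P m : Euc n →ₗ[ℝ] Euc n), Ψ m k (Phi A k m x) = x) ∧
    (∀ x ∈ LinearMap.ker (P k : Euc n →ₗ[ℝ] Euc n), Ψ m k x ∈ LinearMap.ker (P m : Euc n →ₗ[ℝ] Euc n) ∧ Phi A k m (Ψ m k x) = x) ∧
    ‖Ψ m k ∘L (1 - P k)‖ ≤ K * Real.exp (-α * ((k : ℝ) - (m : ℝ)))

namespace LinearMap

variable {R E F : Type*} [Ring R] [AddCommGroup E] [Module R E] [AddCommGroup F] [Module R F]
  {p : E →ₗ[R] E} {q : F →ₗ[R] F} {f : E →ₗ[R] F}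

lemma sub_apply_mem_ker_of_isIdempotentElem (hp : IsIdempotentElem p) (x : E) :
    x - p x ∈ ker p := by
  rw [mem_ker, map_sub, ← Module.End.mul_apply, hp.eq, sub_self]

lemma comap_ker_eq_ker_sup_ker_of_comp_eq (hp : IsIdempotentElem p) (hcomm : f ∘ₗ p = q ∘ₗ f) :
    (ker q).comap f = ker p ⊔ ker f := by
  refine le_antisymm (fun x hx ↦ ?_) (sup_le (fun x hx ↦ ?_) (Submodule.comap_mono bot_le))
  · have hpx : p x ∈ ker f := by
      rw [mem_ker, ← comp_apply, hcomm, comp_apply]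
      exact hx
    simpa using Submodule.add_mem_sup (sub_apply_mem_ker_of_isIdempotentElem hp x) hpx
  · rw [Submodule.mem_comap, mem_ker, ← comp_apply, ← hcomm, comp_apply, mem_ker.mp hx, map_zero]

lemma comap_range_eq_range_of_comp_eq (hp : IsIdempotentElem p) (hq : IsIdempotentElem q)
    (hcomm : f ∘ₗ p = q ∘ₗ f) (hdisj : Disjoint (ker p) (ker f)) :
    (range q).comap f = range p := by
  ext x
  have hfp : f (p x) = q (f x) := congr($hcomm x)
  rw [Submodule.mem_comap, IsIdempotentElem.mem_range_iff hq, IsIdempotentElem.mem_range_iff hp]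
  constructor
  · intro hx
    have hsub : x - p x ∈ ker p ⊓ ker f := Submodule.mem_inf.mpr
      ⟨sub_apply_mem_ker_of_isIdempotentElem hp x, by rw [mem_ker, map_sub, hfp, hx, sub_self]⟩
    rw [hdisj.eq_bot, Submodule.mem_bot, sub_eq_zero] at hsub
    exact hsub.symm
  · intro hx
    rw [← hfp, hx]

end LinearMap

lemma Phi_self {n : ℕ} (A : ℤ → (Euc n →L[ℝ] Euc n)) (m : ℤ) : Phi A m m = 1 := by
  simp [Phi]

lemma Phi_add_one {n : ℕ} (A : ℤ → (Euc n →L[ℝ] Euc n)) {k m : ℤ} (h : m ≤ k) :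
    Phi A (k + 1) m = A k ∘L Phi A k m := by
  rw [Phi, Phi, show (k + 1 - m).toNat = (k - m).toNat + 1 by omega, List.range_succ]
  simp [max_eq_left (sub_nonneg.mpr h)]
  rfl

lemma bijOn_Phi {n : ℕ} (A : ℤ → (Euc n →L[ℝ] Euc n)) (S : ℤ → Set (Euc n)) {m k : ℤ}
    (hmk : m ≤ k) (hA : ∀ j, m ≤ j → j < k → Set.BijOn (A j) (S j) (S (j + 1))) :
    Set.BijOn (Phi A k m) (S m) (S k) := by
  induction k, hmk using Int.leInduction with
  | base => simpa [Phi_self] using Set.bijOn_id (S m)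
  | succ k hmk ih =>
    rw [Phi_add_one A hmk, ContinuousLinearMap.coe_comp]
    exact (hA k hmk (by omega)).comp (ih fun j hmj hjk ↦ hA j hmj (by omega))

theorem statement1_general {n : ℕ} (A P : ℤ → (Euc n →L[ℝ] Euc n)) (J : Set ℤ)
    (hJ : IsIntInterval J)
    (hproj : ∀ k ∈ J, P k ∘L P k = P k)
    (hbij : ∀ k : ℤ, k ∈ J → k + 1 ∈ J →
      Set.BijOn (A k) (LinearMap.ker (P k : Euc n →ₗ[ℝ] Euc n) : Set (Euc n))
        (LinearMap.ker (P (k + 1) : Euc n →ₗ[ℝ] Euc n) : Set (Euc n)))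
    (hinv : ∀ m ∈ J, ∀ k ∈ J, m ≤ k → Phi A k m ∘L P m = P k ∘L Phi A k m) :
    ∀ m ∈ J, ∀ k ∈ J, m ≤ k →
      (LinearMap.range (P k : Euc n →ₗ[ℝ] Euc n)).comap (Phi A k m : Euc n →ₗ[ℝ] Euc n)
          = LinearMap.range (P m : Euc n →ₗ[ℝ] Euc n) ∧
      ((LinearMap.ker (P k : Euc n →ₗ[ℝ] Euc n)).comap (Phi A k m : Euc n →ₗ[ℝ] Euc n)
          = LinearMap.ker (P m : Euc n →ₗ[ℝ] Euc n) ⊔ LinearMap.ker (Phi A k m : Euc n →ₗ[ℝ] Euc n) ∧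
        LinearMap.ker (P m : Euc n →ₗ[ℝ] Euc n) ⊓ LinearMap.ker (Phi A k m : Euc n →ₗ[ℝ] Euc n) = ⊥) ∧
      LinearMap.ker (Phi A k m : Euc n →ₗ[ℝ] Euc n) ≤ LinearMap.range (P m : Euc n →ₗ[ℝ] Euc n) := by
  intro m hm k hk hmk
  have hidem : ∀ j ∈ J, IsIdempotentElem (P j : Euc n →ₗ[ℝ] Euc n) := fun j hj ↦
    ContinuousLinearMap.isIdempotentElem_toLinearMap_iff.mpr (hproj j hj)
  have hcomm : (Phi A k m : Euc n →ₗ[ℝ] Euc n) ∘ₗ P m =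
      (P k : Euc n →ₗ[ℝ] Euc n) ∘ₗ (Phi A k m : Euc n →ₗ[ℝ] Euc n) := by
    rw [← ContinuousLinearMap.toLinearMap_comp, ← ContinuousLinearMap.toLinearMap_comp,
      hinv m hm k hk hmk]
  have hdisj : Disjoint (LinearMap.ker (P m : Euc n →ₗ[ℝ] Euc n))
      (LinearMap.ker (Phi A k m : Euc n →ₗ[ℝ] Euc n)) :=
    LinearMap.disjoint_ker_iff_injOn.mpr <| (bijOn_Phi A _ hmk fun j hmj hjk ↦
      hbij j (hJ hm hk hmj hjk.le) (hJ hm hk (by omega) hjk)).injOn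
  have hrange := LinearMap.comap_range_eq_range_of_comp_eq (hidem m hm) (hidem k hk) hcomm hdisj
  refine ⟨hrange, ⟨LinearMap.comap_ker_eq_ker_sup_ker_of_comp_eq (hidem m hm) hcomm,
    disjoint_iff.mp hdisj⟩, ?_⟩
  exact hrange ▸ Submodule.comap_mono bot_le

/-- for an invariant projection family `P` on an infinite interval `J`
such that `A(k)` maps `N(P(k))` bijectively onto `N(P(k+1))`, one has for `k ≥ m` in `J`:
(a) `Φ(k,m)⁻¹(R(P(k))) = R(P(m))`;
(b) `Φ(k,m)⁻¹(N(P(k))) = N(P(m)) ⊕ N(Φ(k,m))` (an internal direct sum);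
(c) `N(Φ(k,m)) ⊆ R(P(m))`. -/
theorem statement1 {n : ℕ} (A P : ℤ → (Euc n →L[ℝ] Euc n)) (J : Set ℤ)
    (hJ : IsIntInterval J) (hJinf : J.Infinite)
    (hproj : ∀ k ∈ J, P k ∘L P k = P k)
    (hbij : ∀ k : ℤ, k ∈ J → k + 1 ∈ J →
      Set.BijOn (A k) (LinearMap.ker (P k : Euc n →ₗ[ℝ] Euc n) : Set (Euc n))
        (LinearMap.ker (P (k + 1) : Euc n →ₗ[ℝ] Euc n) : Set (Euc n)))
    (hinv : ∀ m ∈ J, ∀ k ∈ J, m ≤ k → Phi A k m ∘L P m = P k ∘L Phi A k m) :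
    ∀ m ∈ J, ∀ k ∈ J, m ≤ k →
      (LinearMap.range (P k : Euc n →ₗ[ℝ] Euc n)).comap (Phi A k m : Euc n →ₗ[ℝ] Euc n)
          = LinearMap.range (P m : Euc n →ₗ[ℝ] Euc n) ∧
      ((LinearMap.ker (P k : Euc n →ₗ[ℝ] Euc n)).comap (Phi A k m : Euc n →ₗ[ℝ] Euc n)
          = LinearMap.ker (P m : Euc n →ₗ[ℝ] Euc n) ⊔ LinearMap.ker (Phi A k m : Euc n →ₗ[ℝ] Euc n) ∧
        LinearMap.ker (P m : Euc n →ₗ[ℝ] Euc n) ⊓ LinearMap.ker (Phi A k m : Euc n →ₗ[ℝ] Euc n) = ⊥) ∧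
      LinearMap.ker (Phi A k m : Euc n →ₗ[ℝ] Euc n) ≤ LinearMap.range (P m : Euc n →ₗ[ℝ] Euc n) :=
  statement1_general A P J hJ hproj hbij hinv
end
end

section
/- Suppose the equation x(k+1) = A(k)x(k) has an exponential dichotomy on an infinite interval J with projection P(k) and constants K, α, and suppose J contains [m,∞). Then the range of P(m) equals the set of initial values of solutions bounded in forward time: R(P(m)) = { ξ ∈ ℝⁿ : sup_{k ≥ m} ‖Φ(k,m)ξ‖ < ∞ }. -/
noncomputable section

open scoped BigOperators

/-! A solution starting in `R(P(m))` decays by the forward estimate. Conversely, the component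
`η = ξ - P(m) ξ` in `N(P(m))` of a forward-bounded initial value `ξ` starts a bounded solution,
and the backward estimate gives `‖η‖ ≤ K e^{-α(k-m)} ‖Φ(k,m) η‖` for every `k ≥ m`, so `η = 0`. -/

open Filter Topology

lemma tendsto_exp_neg_mul_intCast_sub_atTop {α : ℝ} (hα : 0 < α) (m : ℤ) :
    Tendsto (fun k : ℤ => Real.exp (-α * ((k : ℝ) - m))) atTop (𝓝 0) := by
  have hshift : Tendsto (fun k : ℤ => (k : ℝ) - m) atTop atTop := by
    simpa only [sub_eq_add_neg] using
      tendsto_atTop_add_const_right _ (-(m : ℝ)) tendsto_intCast_atTop_atTop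
  exact Real.tendsto_exp_atBot.comp (hshift.const_mul_atTop_of_neg (neg_lt_zero.mpr hα))

namespace ExpDichotomyOn

variable {n : ℕ} {A P : ℤ → (Euc n →L[ℝ] Euc n)} {J : Set ℤ} {K α : ℝ}

lemma proj_apply_proj (h : ExpDichotomyOn A J P K α) {m : ℤ} (hm : m ∈ J) (x : Euc n) :
    P m (P m x) = P m x :=
  congrArg (· x) (h.proj m hm)

lemma exp_decay_le (h : ExpDichotomyOn A J P K α) {m k : ℤ} (hmk : m ≤ k) :
    K * Real.exp (-α * ((k : ℝ) - m)) ≤ K := by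
  have hkm : (0 : ℝ) ≤ (k : ℝ) - m := sub_nonneg.mpr (Int.cast_le.mpr hmk)
  refine mul_le_of_le_one_right (by linarith [h.one_le_K]) (Real.exp_le_one_iff.mpr ?_)
  nlinarith [h.alpha_pos]

lemma norm_Phi_apply_le_of_mem_range (h : ExpDichotomyOn A J P K α) {m k : ℤ}
    (hm : m ∈ J) (hk : k ∈ J) (hmk : m ≤ k) {ξ : Euc n}
    (hξ : ξ ∈ LinearMap.range (P m : Euc n →ₗ[ℝ] Euc n)) :
    ‖Phi A k m ξ‖ ≤ K * ‖ξ‖ := by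
  obtain ⟨ζ, rfl⟩ := hξ
  calc ‖Phi A k m (P m ζ)‖ = ‖(Phi A k m ∘L P m) (P m ζ)‖ := by
        rw [ContinuousLinearMap.comp_apply, h.proj_apply_proj hm]
    _ ≤ K * ‖P m ζ‖ :=
        (Phi A k m ∘L P m).le_of_opNorm_le ((h.forward m hm k hk hmk).trans (h.exp_decay_le hmk)) _

lemma norm_le_of_mem_ker (h : ExpDichotomyOn A J P K α) {m k : ℤ}
    (hm : m ∈ J) (hk : k ∈ J) (hmk : m ≤ k) {η : Euc n}
    (hη : η ∈ LinearMap.ker (P m : Euc n →ₗ[ℝ] Euc n)) :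
    ‖η‖ ≤ K * Real.exp (-α * ((k : ℝ) - m)) * ‖Phi A k m η‖ := by
  obtain ⟨Ψ, hΨ⟩ := h.backward
  obtain ⟨hΨΦ, -, hΨnorm⟩ := hΨ m hm k hk hmk
  have hPη : P m η = 0 := hη
  have hΦη : P k (Phi A k m η) = 0 := by
    rw [← ContinuousLinearMap.comp_apply, ← h.invariance m hm k hk hmk,
      ContinuousLinearMap.comp_apply, hPη, map_zero]
  have hη_eq : (Ψ m k ∘L (1 - P k)) (Phi A k m η) = η := by
    rw [ContinuousLinearMap.comp_apply, sub_apply, one_apply_eq_self, hΦη, sub_zero, hΨΦ η hη]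
  calc ‖η‖ = ‖(Ψ m k ∘L (1 - P k)) (Phi A k m η)‖ := by rw [hη_eq]
    _ ≤ K * Real.exp (-α * ((k : ℝ) - m)) * ‖Phi A k m η‖ :=
        (Ψ m k ∘L (1 - P k)).le_of_opNorm_le hΨnorm _

lemma eq_zero_of_mem_ker_of_bounded (h : ExpDichotomyOn A J P K α) {m : ℤ}
    (hm : ∀ k, m ≤ k → k ∈ J) {η : Euc n} (hη : η ∈ LinearMap.ker (P m : Euc n →ₗ[ℝ] Euc n))
    {C : ℝ} (hC : ∀ k, m ≤ k → ‖Phi A k m η‖ ≤ C) : η = 0 := by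
  have hdecay : Tendsto (fun k : ℤ => K * Real.exp (-α * ((k : ℝ) - m)) * C) atTop (𝓝 0) := by
    simpa using ((tendsto_exp_neg_mul_intCast_sub_atTop h.alpha_pos m).const_mul K).mul_const C
  refine norm_le_zero_iff.mp (ge_of_tendsto hdecay (eventually_atTop.mpr ⟨m, fun k hk => ?_⟩))
  have hK : 0 ≤ K * Real.exp (-α * ((k : ℝ) - m)) := by
    have := h.one_le_K
    positivity
  exact (h.norm_le_of_mem_ker (hm m le_rfl) (hm k hk) hk hη).trans
    (mul_le_mul_of_nonneg_left (hC k hk) hK)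

end ExpDichotomyOn

theorem statement2_general {n : ℕ} (A P : ℤ → (Euc n →L[ℝ] Euc n)) (J : Set ℤ) (K α : ℝ)
    (hED : ExpDichotomyOn A J P K α) (m : ℤ) (hm : ∀ k : ℤ, m ≤ k → k ∈ J) :
    (LinearMap.range (P m : Euc n →ₗ[ℝ] Euc n) : Set (Euc n))
      = {ξ : Euc n | ∃ C : ℝ, ∀ k : ℤ, m ≤ k → ‖Phi A k m ξ‖ ≤ C} := by
  have hmJ : m ∈ J := hm m le_rfl
  ext ξ
  refine ⟨fun hξ => ⟨K * ‖ξ‖, fun k hk =>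
    hED.norm_Phi_apply_le_of_mem_range hmJ (hm k hk) hk hξ⟩, fun ⟨C, hC⟩ => ?_⟩
  have hker : ξ - P m ξ ∈ LinearMap.ker (P m : Euc n →ₗ[ℝ] Euc n) := by
    simp [hED.proj_apply_proj hmJ]
  have hbdd : ∀ k, m ≤ k → ‖Phi A k m (ξ - P m ξ)‖ ≤ C + K * ‖P m ξ‖ := fun k hk =>
    (map_sub (Phi A k m) ξ (P m ξ) ▸ norm_sub_le _ _).trans <| add_le_add (hC k hk)
      (hED.norm_Phi_apply_le_of_mem_range hmJ (hm k hk) hk ⟨ξ, rfl⟩)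
  exact ⟨ξ, (sub_eq_zero.mp (hED.eq_zero_of_mem_ker_of_bounded hm hker hbdd)).symm⟩

/-- if the equation has an exponential dichotomy on an infinite interval `J`
containing `[m, ∞)`, then `R(P(m))` is exactly the set of initial values of solutions
bounded in forward time. -/
theorem statement2 {n : ℕ} (A P : ℤ → (Euc n →L[ℝ] Euc n)) (J : Set ℤ) (K α : ℝ)
    (hJ : IsIntInterval J)
    (hED : ExpDichotomyOn A J P K α) (m : ℤ) (hm : ∀ k : ℤ, m ≤ k → k ∈ J) :
    (LinearMap.range (P m : Euc n →ₗ[ℝ] Euc n) : Set (Euc n))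
      = {ξ : Euc n | ∃ C : ℝ, ∀ k : ℤ, m ≤ k → ‖Phi A k m ξ‖ ≤ C} :=
  statement2_general A P J K α hED m hm
end
end

section
/- Suppose the equation x(k+1) = A(k)x(k) has an exponential dichotomy on an infinite interval J with projection P(k) and constants K, α, and suppose J contains (−∞,m]. Then the nullspace N(P(m)) equals the set of ξ ∈ ℝⁿ for which there exists a solution y(k) of the equation, defined and bounded for k ≤ m (i.e. y(k+1) = A(k)y(k) for k ≤ m−1 and sup_{k ≤ m} ‖y(k)‖ < ∞), with y(m) = ξ. Moreover, for each ξ ∈ N(P(m)) such a bounded solution is unique. -/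
/-!
A solution that is bounded for `k ≤ m` satisfies `P(k) y(k) = Φ(k,j) P(j) y(j)` for every `j ≤ k`,
which the forward estimate bounds by `K e^{-α(k-j)} C`; letting `j → -∞` gives `y(k) ∈ N(P(k))`.
Conversely, for `ξ ∈ N(P(m))` the backward flow `k ↦ Φ(k,m) ξ` on the unstable spaces is a
solution bounded by `K ‖ξ‖`. Two bounded solutions with the same value at `m` both take values
in `N(P(k))`, on which `Φ(m,k)` is injective, so they coincide.
-/

noncomputable section

open scoped BigOperators

namespace Phi

variable {n : ℕ} (A : ℤ → (Euc n →L[ℝ] Euc n))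

-- `Phi` ranges over `List.range` coerced to `List ℤ`; this form indexes by `ℕ` instead.
lemma eq_prod (k m : ℤ) :
    Phi A k m = ((List.range (k - m).toNat).map fun i : ℕ => A (m + i)).reverse.prod := by
  simp only [Phi, List.pure_def, List.bind_eq_flatMap]
  rw [show (fun a : ℕ => [(a : ℤ)]) = pure ∘ Nat.cast from rfl, List.flatMap_pure_eq_map,
    List.map_map]
  rfl

@[simp]
lemma self (m : ℤ) : Phi A m m = 1 := by
  simp [eq_prod]

lemma succ_left {k m : ℤ} (h : m ≤ k) : Phi A (k + 1) m = A k ∘L Phi A k m := by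
  rw [eq_prod, eq_prod, show (k + 1 - m).toNat = (k - m).toNat + 1 by omega, List.range_succ]
  simp only [List.map_append, List.map_singleton, List.reverse_append, List.reverse_singleton,
    List.singleton_append, List.prod_cons, Int.toNat_of_nonneg (sub_nonneg.2 h), add_sub_cancel]
  rfl

lemma eq_comp_of_lt {k m : ℤ} (h : m < k) : Phi A k m = Phi A k (m + 1) ∘L A m := by
  rw [eq_prod, eq_prod, show (k - m).toNat = (k - (m + 1)).toNat + 1 by omega,
    List.range_succ_eq_map]
  simp only [List.map_cons, CharP.cast_eq_zero, add_zero, List.map_map, List.reverse_cons,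
    List.prod_append, List.prod_cons, List.prod_nil, mul_one, add_assoc, add_comm (1 : ℤ)]
  rfl

end Phi

lemma eq_zero_of_norm_le_mul_pow {E : Type*} [NormedAddCommGroup E] {x : E} {c r : ℝ}
    (hr₀ : 0 ≤ r) (hr : r < 1) (h : ∀ N : ℕ, ‖x‖ ≤ c * r ^ N) : x = 0 :=
  norm_le_zero_iff.mp <| ge_of_tendsto' (by
    simpa using (tendsto_pow_atTop_nhds_zero_of_lt_one hr₀ hr).const_mul c) h

variable {n : ℕ} {A : ℤ → (Euc n →L[ℝ] Euc n)}

lemma Phi_apply_solution {m : ℤ} {y : ℤ → Euc n} (hy : ∀ k < m, y (k + 1) = A k (y k))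
    {j k : ℤ} (hjk : j ≤ k) (hkm : k ≤ m) : Phi A k j (y j) = y k := by
  induction k, hjk using Int.leInduction with
  | base => simp
  | succ k hjk ih =>
    rw [Phi.succ_left A hjk, ContinuousLinearMap.comp_apply, ih (by omega), hy k (by omega)]

namespace ExpDichotomyOn

variable {P : ℤ → (Euc n →L[ℝ] Euc n)} {J : Set ℤ} {K α : ℝ}
  (hED : ExpDichotomyOn A J P K α) {m : ℤ} (hm : ∀ k ≤ m, k ∈ J)
include hED hm

lemma norm_apply_solution_le {y : ℤ → Euc n} (hy : ∀ k < m, y (k + 1) = A k (y k)) {C : ℝ}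
    (hC : ∀ k ≤ m, ‖y k‖ ≤ C) {j k : ℤ} (hjk : j ≤ k) (hkm : k ≤ m) :
    ‖P k (y k)‖ ≤ K * Real.exp (-α * (k - j)) * C := by
  have hjm : j ≤ m := hjk.trans hkm
  have hPy : P k (y k) = (Phi A k j ∘L P j) (y j) := by
    rw [hED.invariance j (hm j hjm) k (hm k hkm) hjk, ContinuousLinearMap.comp_apply,
      Phi_apply_solution hy hjk hkm]
  calc ‖P k (y k)‖ ≤ ‖Phi A k j ∘L P j‖ * ‖y j‖ :=
        hPy ▸ (Phi A k j ∘L P j).le_opNorm _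
    _ ≤ K * Real.exp (-α * (k - j)) * C :=
      mul_le_mul (hED.forward j (hm j hjm) k (hm k hkm) hjk) (hC j hjm) (norm_nonneg _)
        (mul_nonneg (zero_le_one.trans hED.one_le_K) (Real.exp_pos _).le)

lemma proj_apply_solution_eq_zero {y : ℤ → Euc n} (hy : ∀ k < m, y (k + 1) = A k (y k))
    {C : ℝ} (hC : ∀ k ≤ m, ‖y k‖ ≤ C) {k : ℤ} (hkm : k ≤ m) : P k (y k) = 0 := by
  refine eq_zero_of_norm_le_mul_pow (c := K * C) (Real.exp_pos _).le
    (Real.exp_lt_one_iff.2 (neg_lt_zero.2 hED.alpha_pos)) fun N => ?_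
  have hexp : Real.exp (-α * (k - (k - N : ℤ))) = Real.exp (-α) ^ N := by
    rw [← Real.exp_nat_mul]; push_cast; ring_nf
  have := hED.norm_apply_solution_le hm hy hC (j := k - N) (by omega) hkm
  rwa [hexp, mul_right_comm] at this

omit hm in
lemma injOn_Phi {j k : ℤ} (hj : j ∈ J) (hk : k ∈ J) (hjk : j ≤ k) :
    Set.InjOn (Phi A k j) (LinearMap.ker (P j : Euc n →ₗ[ℝ] Euc n)) := by
  obtain ⟨Ψ, hΨ⟩ := hED.backward
  exact Set.LeftInvOn.injOn (f₁' := Ψ j k) (hΨ j hj k hk hjk).1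

lemma exists_bounded_solution {ξ : Euc n}
    (hξ : ξ ∈ LinearMap.ker (P m : Euc n →ₗ[ℝ] Euc n)) :
    ∃ y : ℤ → Euc n, (∀ k < m, y (k + 1) = A k (y k)) ∧
      (∃ C : ℝ, ∀ k ≤ m, ‖y k‖ ≤ C) ∧ y m = ξ := by
  obtain ⟨Ψ, hΨ⟩ := hED.backward
  have hmJ : m ∈ J := hm m le_rfl
  have hΨξ (k : ℤ) (hk : k ≤ m) :
      Ψ k m ξ ∈ LinearMap.ker (P k : Euc n →ₗ[ℝ] Euc n) ∧ Phi A m k (Ψ k m ξ) = ξ :=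
    (hΨ k (hm k hk) m hmJ hk).2.1 ξ hξ
  refine ⟨fun k => Ψ k m ξ, fun k hk => ?_, ⟨K * ‖ξ‖, fun k hk => ?_⟩, ?_⟩
  · obtain ⟨hker, hPhi⟩ := hΨξ k hk.le
    obtain ⟨hker', hPhi'⟩ := hΨξ (k + 1) hk
    have hAker := (hED.bijOn k (hm k hk.le) (hm _ hk)).mapsTo hker
    refine hED.injOn_Phi (hm _ hk) hmJ hk hker' hAker ?_
    rw [hPhi', ← ContinuousLinearMap.comp_apply, ← Phi.eq_comp_of_lt A hk, hPhi]
  · have hexp : Real.exp (-α * (m - k)) ≤ 1 :=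
      Real.exp_le_one_iff.2 (mul_nonpos_of_nonpos_of_nonneg (neg_nonpos.2 hED.alpha_pos.le)
        (sub_nonneg.2 (Int.cast_le.2 hk)))
    have hξ' : (1 - P m) ξ = ξ := by
      simpa [sub_eq_self] using hξ
    calc ‖Ψ k m ξ‖ = ‖(Ψ k m ∘L (1 - P m)) ξ‖ := by
          rw [ContinuousLinearMap.comp_apply, hξ']
      _ ≤ ‖Ψ k m ∘L (1 - P m)‖ * ‖ξ‖ := ContinuousLinearMap.le_opNorm _ _
      _ ≤ K * Real.exp (-α * (m - k)) * ‖ξ‖ :=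
        mul_le_mul_of_nonneg_right (hΨ k (hm k hk) m hmJ hk).2.2 (norm_nonneg _)
      _ ≤ K * ‖ξ‖ := by
        gcongr
        exact mul_le_of_le_one_right (zero_le_one.trans hED.one_le_K) hexp
  · simpa using (hΨ m hmJ m hmJ le_rfl).1 ξ hξ

end ExpDichotomyOn

theorem statement3_general {n : ℕ} (A P : ℤ → (Euc n →L[ℝ] Euc n)) (J : Set ℤ) (K α : ℝ)
    (hED : ExpDichotomyOn A J P K α) (m : ℤ) (hm : ∀ k : ℤ, k ≤ m → k ∈ J) :
    ((LinearMap.ker (P m : Euc n →ₗ[ℝ] Euc n) : Set (Euc n))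
        = {ξ : Euc n | ∃ y : ℤ → Euc n, (∀ k : ℤ, k < m → y (k + 1) = A k (y k)) ∧
            (∃ C : ℝ, ∀ k : ℤ, k ≤ m → ‖y k‖ ≤ C) ∧ y m = ξ}) ∧
    (∀ ξ ∈ LinearMap.ker (P m : Euc n →ₗ[ℝ] Euc n), ∀ y z : ℤ → Euc n,
      (∀ k : ℤ, k < m → y (k + 1) = A k (y k)) → (∃ C : ℝ, ∀ k : ℤ, k ≤ m → ‖y k‖ ≤ C) →
        y m = ξ →
      (∀ k : ℤ, k < m → z (k + 1) = A k (z k)) → (∃ C : ℝ, ∀ k : ℤ, k ≤ m → ‖z k‖ ≤ C) →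
        z m = ξ →
      ∀ k : ℤ, k ≤ m → y k = z k) := by
  refine ⟨Set.Subset.antisymm (fun ξ hξ => hED.exists_bounded_solution hm hξ) ?_, ?_⟩
  · rintro ξ ⟨y, hy, ⟨C, hC⟩, rfl⟩
    exact hED.proj_apply_solution_eq_zero hm hy hC le_rfl
  · rintro ξ - y z hy ⟨Cy, hCy⟩ hym hz ⟨Cz, hCz⟩ hzm k hk
    refine hED.injOn_Phi (hm k hk) (hm m le_rfl) hk
      (hED.proj_apply_solution_eq_zero hm hy hCy hk)
      (hED.proj_apply_solution_eq_zero hm hz hCz hk) ?_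
    rw [Phi_apply_solution hy hk le_rfl, Phi_apply_solution hz hk le_rfl, hym, hzm]

/-- if the equation has an exponential dichotomy on an infinite interval `J`
containing `(-∞, m]`, then `N(P(m))` is exactly the set of `ξ` for which there is a
solution of the equation, defined and bounded for `k ≤ m`, taking the value `ξ` at `m`;
moreover such a bounded solution is unique. -/
theorem statement3 {n : ℕ} (A P : ℤ → (Euc n →L[ℝ] Euc n)) (J : Set ℤ) (K α : ℝ)
    (hJ : IsIntInterval J)
    (hED : ExpDichotomyOn A J P K α) (m : ℤ) (hm : ∀ k : ℤ, k ≤ m → k ∈ J) :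
    ((LinearMap.ker (P m : Euc n →ₗ[ℝ] Euc n) : Set (Euc n))
        = {ξ : Euc n | ∃ y : ℤ → Euc n, (∀ k : ℤ, k < m → y (k + 1) = A k (y k)) ∧
            (∃ C : ℝ, ∀ k : ℤ, k ≤ m → ‖y k‖ ≤ C) ∧ y m = ξ}) ∧
    (∀ ξ ∈ LinearMap.ker (P m : Euc n →ₗ[ℝ] Euc n), ∀ y z : ℤ → Euc n,
      (∀ k : ℤ, k < m → y (k + 1) = A k (y k)) → (∃ C : ℝ, ∀ k : ℤ, k ≤ m → ‖y k‖ ≤ C) →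
        y m = ξ →
      (∀ k : ℤ, k < m → z (k + 1) = A k (z k)) → (∃ C : ℝ, ∀ k : ℤ, k ≤ m → ‖z k‖ ≤ C) →
        z m = ξ →
      ∀ k : ℤ, k ≤ m → y k = z k) :=
  statement3_general A P J K α hED m hm
end
end

section
/- Suppose the equation x(k+1) = A(k)x(k) has an exponential dichotomy on all of ℤ with projection P(k) and also an exponential dichotomy on ℤ with projection Q(k). Then the projection is uniquely determined: P(k) = Q(k) for every k ∈ ℤ. -/
/-!
For a dichotomy on all of `ℤ`, `R(P k)` is the set of `x` whose forward orbit `Φ(m,k) x`,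
`m ≥ k`, stays bounded, and `N(P k)` is the set of `x` that can be reached from uniformly
bounded points `y` at every earlier time `m`: the forward estimate gives boundedness, and the
backward estimate forces any other component to grow like `e^{α|m-k|}`. Both sets depend only
on `A`, and an idempotent is determined by its range and kernel.
-/

noncomputable section

open scoped BigOperators

open Real Filter ContinuousLinearMap

lemma eq_zero_of_forall_norm_le_mul_exp {E : Type*} [NormedAddCommGroup E] {v : E} {C α : ℝ}
    (hα : 0 < α) (h : ∀ N : ℕ, ‖v‖ ≤ C * exp (-α * N)) : v = 0 := by
  have hlim : Tendsto (fun N : ℕ => C * exp (-α * N)) atTop (nhds 0) := by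
    have hlin : Tendsto (fun N : ℕ => -α * (N : ℝ)) atTop atBot :=
      tendsto_natCast_atTop_atTop.const_mul_atTop_of_neg (neg_neg_of_pos hα)
    simpa using (tendsto_exp_atBot.comp hlin).const_mul C
  exact norm_le_zero_iff.mp (ge_of_tendsto' hlim h)

lemma mul_exp_neg_mul_sub_le_self {K α a b : ℝ} (hK : 0 ≤ K) (hα : 0 < α) (hab : a ≤ b) :
    K * exp (-α * (b - a)) ≤ K :=
  mul_le_of_le_one_right hK (exp_le_one_iff.mpr (by nlinarith))

namespace ExpDichotomyOn

variable {n : ℕ} {A P : ℤ → (Euc n →L[ℝ] Euc n)} {J : Set ℤ} {K α : ℝ}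

lemma isIdempotentElem (h : ExpDichotomyOn A J P K α) {k : ℤ} (hk : k ∈ J) :
    IsIdempotentElem (P k : Euc n →ₗ[ℝ] Euc n) :=
  LinearMap.ext fun x => congr($(h.proj k hk) x)

lemma apply_apply (h : ExpDichotomyOn A J P K α) {k : ℤ} (hk : k ∈ J) (x : Euc n) :
    P k (P k x) = P k x :=
  congr($(h.proj k hk) x)

lemma Phi_apply_mem_ker (h : ExpDichotomyOn A J P K α) {m k : ℤ} (hm : m ∈ J) (hk : k ∈ J)
    (hmk : m ≤ k) {y : Euc n} (hy : P m y = 0) : P k (Phi A k m y) = 0 := by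
  rw [← ContinuousLinearMap.comp_apply, ← h.invariance m hm k hk hmk,
    ContinuousLinearMap.comp_apply, hy, map_zero]

lemma norm_Phi_apply_proj_le (h : ExpDichotomyOn A J P K α) {m k : ℤ} (hm : m ∈ J)
    (hk : k ∈ J) (hmk : m ≤ k) (x : Euc n) :
    ‖Phi A k m (P m x)‖ ≤ K * exp (-α * (k - m)) * ‖x‖ :=
  calc ‖Phi A k m (P m x)‖ ≤ ‖Phi A k m ∘L P m‖ * ‖x‖ :=
        le_opNorm (Phi A k m ∘L P m) x
    _ ≤ K * exp (-α * (k - m)) * ‖x‖ := by gcongr; exact h.forward m hm k hk hmk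

lemma norm_le_of_apply_eq_zero (h : ExpDichotomyOn A J P K α) {m k : ℤ} (hm : m ∈ J)
    (hk : k ∈ J) (hmk : m ≤ k) {y : Euc n} (hy : P m y = 0) :
    ‖y‖ ≤ K * exp (-α * (k - m)) * ‖Phi A k m y‖ := by
  obtain ⟨Ψ, hΨ⟩ := h.backward
  obtain ⟨hleft, -, hnorm⟩ := hΨ m hm k hk hmk
  have hy' : (Ψ m k ∘L (1 - P k)) (Phi A k m y) = y := by
    rw [ContinuousLinearMap.comp_apply, sub_apply, one_apply_eq_self,
      h.Phi_apply_mem_ker hm hk hmk hy, sub_zero, hleft y hy]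
  calc ‖y‖ = ‖(Ψ m k ∘L (1 - P k)) (Phi A k m y)‖ := by rw [hy']
    _ ≤ ‖Ψ m k ∘L (1 - P k)‖ * ‖Phi A k m y‖ := le_opNorm _ _
    _ ≤ K * exp (-α * (k - m)) * ‖Phi A k m y‖ := by gcongr

lemma exists_preimage_of_apply_eq_zero (h : ExpDichotomyOn A J P K α) {m k : ℤ} (hm : m ∈ J)
    (hk : k ∈ J) (hmk : m ≤ k) {x : Euc n} (hx : P k x = 0) :
    ∃ y, Phi A k m y = x ∧ ‖y‖ ≤ K * exp (-α * (k - m)) * ‖x‖ := by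
  obtain ⟨Ψ, hΨ⟩ := h.backward
  obtain ⟨-, hright, hnorm⟩ := hΨ m hm k hk hmk
  have hx' : (Ψ m k ∘L (1 - P k)) x = Ψ m k x := by
    rw [ContinuousLinearMap.comp_apply, sub_apply, one_apply_eq_self, hx, sub_zero]
  refine ⟨Ψ m k x, (hright x hx).2, ?_⟩
  calc ‖Ψ m k x‖ = ‖(Ψ m k ∘L (1 - P k)) x‖ := by rw [hx']
    _ ≤ ‖Ψ m k ∘L (1 - P k)‖ * ‖x‖ := le_opNorm _ _
    _ ≤ K * exp (-α * (k - m)) * ‖x‖ := by gcongr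

lemma mem_range_iff (h : ExpDichotomyOn A Set.univ P K α) {k : ℤ} {x : Euc n} :
    x ∈ LinearMap.range (P k : Euc n →ₗ[ℝ] Euc n) ↔
      ∃ C, ∀ m, k ≤ m → ‖Phi A m k x‖ ≤ C := by
  have hK : 0 ≤ K := zero_le_one.trans h.one_le_K
  have hbound : ∀ m, k ≤ m → ‖Phi A m k (P k x)‖ ≤ K * ‖x‖ := fun m hkm =>
    (h.norm_Phi_apply_proj_le trivial trivial hkm x).trans <| mul_le_mul_of_nonneg_right
      (mul_exp_neg_mul_sub_le_self hK h.alpha_pos (by exact_mod_cast hkm)) (norm_nonneg x)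
  rw [LinearMap.IsIdempotentElem.mem_range_iff (h.isIdempotentElem trivial),
    ContinuousLinearMap.coe_coe]
  refine ⟨fun hx => ⟨K * ‖x‖, by rwa [hx] at hbound⟩, fun ⟨C, hC⟩ => ?_⟩
  -- The component `x - P k x` in `N(P k)` grows exponentially unless it vanishes.
  suffices hv : x - P k x = 0 from (sub_eq_zero.mp hv).symm
  refine eq_zero_of_forall_norm_le_mul_exp (C := K * (C + K * ‖x‖)) h.alpha_pos fun N => ?_
  have hkN : k ≤ k + N := by omega
  have hPv : P k (x - P k x) = 0 := by rw [map_sub, h.apply_apply trivial, sub_self]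
  have hgrowth : ‖Phi A (k + N) k (x - P k x)‖ ≤ C + K * ‖x‖ := by
    rw [map_sub]
    exact (norm_sub_le _ _).trans (add_le_add (hC _ hkN) (hbound _ hkN))
  calc ‖x - P k x‖
        ≤ K * exp (-α * ((k + N : ℤ) - k)) * ‖Phi A (k + N) k (x - P k x)‖ :=
        h.norm_le_of_apply_eq_zero trivial trivial hkN hPv
    _ ≤ K * exp (-α * ((k + N : ℤ) - k)) * (C + K * ‖x‖) :=
        mul_le_mul_of_nonneg_left hgrowth (by positivity)
    _ = K * (C + K * ‖x‖) * exp (-α * N) := by push_cast; ring_nf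

lemma mem_ker_iff (h : ExpDichotomyOn A Set.univ P K α) {k : ℤ} {x : Euc n} :
    x ∈ LinearMap.ker (P k : Euc n →ₗ[ℝ] Euc n) ↔
      ∃ C, ∀ m, m ≤ k → ∃ y, Phi A k m y = x ∧ ‖y‖ ≤ C := by
  have hK : 0 ≤ K := zero_le_one.trans h.one_le_K
  rw [LinearMap.mem_ker, ContinuousLinearMap.coe_coe]
  refine ⟨fun hx => ⟨K * ‖x‖, fun m hmk => ?_⟩, fun ⟨C, hC⟩ => ?_⟩
  · obtain ⟨y, hyx, hy⟩ := h.exists_preimage_of_apply_eq_zero trivial trivial hmk hx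
    exact ⟨y, hyx, hy.trans <| mul_le_mul_of_nonneg_right
      (mul_exp_neg_mul_sub_le_self hK h.alpha_pos (by exact_mod_cast hmk)) (norm_nonneg x)⟩
  · refine eq_zero_of_forall_norm_le_mul_exp (C := K * C) h.alpha_pos fun N => ?_
    have hNk : k - N ≤ k := by omega
    obtain ⟨y, rfl, hy⟩ := hC _ hNk
    rw [← ContinuousLinearMap.comp_apply, ← h.invariance _ trivial _ trivial hNk,
      ContinuousLinearMap.comp_apply]
    calc ‖Phi A k (k - N) (P (k - N) y)‖ ≤ K * exp (-α * (k - (k - N : ℤ))) * ‖y‖ :=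
          h.norm_Phi_apply_proj_le trivial trivial hNk y
      _ ≤ K * exp (-α * (k - (k - N : ℤ))) * C := mul_le_mul_of_nonneg_left hy (by positivity)
      _ = K * C * exp (-α * N) := by push_cast; ring_nf

end ExpDichotomyOn

/-- for an exponential dichotomy on all of `ℤ` the projection family is
uniquely determined. -/
theorem statement6 {n : ℕ} (A P Q : ℤ → (Euc n →L[ℝ] Euc n)) (K α K' α' : ℝ)
    (hP : ExpDichotomyOn A Set.univ P K α)
    (hQ : ExpDichotomyOn A Set.univ Q K' α') :
    ∀ k : ℤ, P k = Q k := by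
  intro k
  refine ContinuousLinearMap.coe_injective <|
    LinearMap.IsIdempotentElem.ext (hP.isIdempotentElem trivial) (hQ.isIdempotentElem trivial)
      ⟨?_, ?_⟩
  · ext x
    rw [hP.mem_range_iff, hQ.mem_range_iff]
  · ext x
    rw [hP.mem_ker_iff, hQ.mem_ker_iff]
end
end

section
/- Let S be a subspace of ℝⁿ with dim(S) = r, and let A and B be real n×n matrices such that dim((AB)^{−1}(S)) = r, where (AB)^{−1}(S) = {x ∈ ℝⁿ : ABx ∈ S} denotes the preimage of S under the product AB. Then dim(A^{−1}(S)) = r, where A^{−1}(S) = {x ∈ ℝⁿ : Ax ∈ S}. -/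
noncomputable section

lemma aux_finrank_le_comap {K V : Type*} [Field K] [AddCommGroup V] [Module K V]
    [FiniteDimensional K V] (f : V →ₗ[K] V) (W : Submodule K V) :
    Module.finrank K W ≤ Module.finrank K (W.comap f) := by
  classical
  set g := f.domRestrict (W.comap f)
  have h1 : Module.finrank K (LinearMap.range g) + Module.finrank K (LinearMap.ker g)
      = Module.finrank K (W.comap f) := LinearMap.finrank_range_add_finrank_ker g
  have hrange : LinearMap.range g = Submodule.map f (W.comap f) := by
    ext x; simp [g, LinearMap.mem_range, Submodule.mem_map]
  have hmc : Submodule.map f (W.comap f) = LinearMap.range f ⊓ W :=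
    Submodule.map_comap_eq f W
  have hkerle : LinearMap.ker f ≤ W.comap f := by
    intro x hx
    simp [Submodule.mem_comap, LinearMap.mem_ker.mp hx]
  have hker : Module.finrank K (LinearMap.ker g) = Module.finrank K (LinearMap.ker f) := by
    have : LinearMap.ker g = Submodule.comap (W.comap f).subtype (LinearMap.ker f) := by
      ext x; simp [g]
    rw [this]
    exact LinearEquiv.finrank_eq (Submodule.comapSubtypeEquivOfLe hkerle)
  have h2 : Module.finrank K ↥(W ⊔ LinearMap.range f) + Module.finrank K ↥(W ⊓ LinearMap.range f)
      = Module.finrank K W + Module.finrank K (LinearMap.range f) :=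
    Submodule.finrank_sup_add_finrank_inf_eq W (LinearMap.range f)
  have h3 : Module.finrank K (LinearMap.range f) + Module.finrank K (LinearMap.ker f)
      = Module.finrank K V := LinearMap.finrank_range_add_finrank_ker f
  have h4 : Module.finrank K ↥(W ⊔ LinearMap.range f) ≤ Module.finrank K V :=
    Submodule.finrank_le _
  rw [hrange, hmc, inf_comm, hker] at h1
  omega

/-- if `S` is a subspace of `ℝⁿ` with `dim S = r` and `A`, `B` are `n × n`
real matrices with `dim ((AB)⁻¹(S)) = r` (preimage of `S` under `x ↦ (AB)x`), then
`dim (A⁻¹(S)) = r`. -/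
theorem statement11 {n : ℕ} (S : Submodule ℝ (Fin n → ℝ)) (r : ℕ)
    (A B : Matrix (Fin n) (Fin n) ℝ)
    (hS : Module.finrank ℝ S = r)
    (hAB : Module.finrank ℝ (S.comap (A * B).mulVecLin) = r) :
    Module.finrank ℝ (S.comap A.mulVecLin) = r := by
  have hcomp : S.comap (A * B).mulVecLin = (S.comap A.mulVecLin).comap B.mulVecLin := by
    rw [Matrix.mulVecLin_mul, Submodule.comap_comp]
  have h1 : Module.finrank ℝ S ≤ Module.finrank ℝ (S.comap A.mulVecLin) :=
    aux_finrank_le_comap A.mulVecLin S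
  have h2 : Module.finrank ℝ (S.comap A.mulVecLin)
      ≤ Module.finrank ℝ (S.comap (A * B).mulVecLin) := by
    rw [hcomp]
    exact aux_finrank_le_comap B.mulVecLin (S.comap A.mulVecLin)
  omega
end
end
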